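/- Let N ≥ 1, let α ∈ (0, 1) satisfy ⌈(N+1)(1−α)⌉ ≤ N, and let S_1, …, S_N, S_{N+1} be real-valued random variables that are exchangeable and almost surely pairwise distinct. Define the conformal quantile q_α = S_{(⌈(N+1)(1−α)⌉)}, the ⌈(N+1)(1−α)⌉-th smallest of the calibration scores S_1, …, S_N. Then ℙ(S_{N+1} ≤ q_α) = ⌈(N+1)(1−α)⌉/(N+1). -/

import Mathlib

/-!
The rank of the test score among all `N + 1` scores decides the event: `S_{N+1} ≤ q_α` holds
exactly when fewer than `k = ⌈(N+1)(1-α)⌉` scores lie strictly below `S_{N+1}`. Exchangeability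
makes the probability of "rank `< k`" the same for every index, and on the almost sure event that
the scores are distinct the ranks are a permutation of `0, …, N`, so exactly `k` indices have
rank `< k`. Summing over the indices gives `(N + 1) · ℙ(S_{N+1} ≤ q_α) = k`.
-/

open MeasureTheory

/-- The `k`-th smallest value (k = 1, …, m) among `v 0, …, v (m-1)`. -/
noncomputable def orderStat {m : ℕ} (v : Fin m → ℝ) (k : ℕ) : ℝ :=
  ((List.ofFn v).insertionSort (· ≤ ·)).getD (k - 1) 0

open Finset

theorem List.SortedLE.countP_lt_le_iff {α : Type*} [LinearOrder α] {L : List α} (hL : L.SortedLE)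
    {j : ℕ} (hj : j < L.length) (t : α) :
    L.countP (· < t) ≤ j ↔ t ≤ L[j] := by
  constructor
  · intro hcount
    by_contra! hjt
    have htake : (L.take (j + 1)).countP (· < t) = j + 1 := by
      rw [List.countP_eq_length.mpr, List.length_take_of_le hj]
      intro a ha
      obtain ⟨i, hi, rfl⟩ := List.mem_take_iff_getElem.mp ha
      simpa using (hL.getElem_le_getElem_of_le (by omega)).trans_lt hjt
    have := (List.take_sublist (j + 1) L).countP_le (p := (· < t))
    omega
  · intro htj
    have hdrop : (L.drop j).countP (· < t) = 0 := by
      refine List.countP_eq_zero.mpr fun a ha => ?_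
      obtain ⟨i, hi, rfl⟩ := List.mem_drop_iff_getElem.mp ha
      simpa using htj.trans (hL.getElem_le_getElem_of_le (by omega))
    rw [← List.take_append_drop j L, List.countP_append, hdrop, add_zero]
    exact (List.countP_le_length).trans (List.length_take_le _ _)

theorem List.countP_ofFn {α : Type*} {m : ℕ} (v : Fin m → α) (p : α → Prop)
    [DecidablePred p] :
    (List.ofFn v).countP (p ·) = #{i | p (v i)} := by
  rw [List.ofFn_eq_map, List.countP_map, card_def, filter_val, ← Multiset.countP_eq_card_filter,
    Fin.univ_def, Multiset.coe_countP]
  rfl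

theorem le_orderStat_iff {m : ℕ} (v : Fin m → ℝ) (t : ℝ) {k : ℕ} (hk_pos : 1 ≤ k)
    (hkm : k ≤ m) :
    t ≤ orderStat v k ↔ #{i | v i < t} < k := by
  set L := (List.ofFn v).insertionSort (· ≤ ·)
  have hj : k - 1 < L.length := by
    rw [List.length_insertionSort, List.length_ofFn]; omega
  have hcount : L.countP (· < t) = #{i | v i < t} :=
    ((List.perm_insertionSort _ _).countP_eq _).trans (List.countP_ofFn v (· < t))
  rw [orderStat, List.getD_eq_getElem _ _ hj, ← List.sortedLE_insertionSort.countP_lt_le_iff hj,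
    hcount]
  omega

section Rank

variable {ι α : Type*} [Fintype ι] [LinearOrder α]

def rank (x : ι → α) (j : ι) : ℕ := #{i | x i < x j}

theorem rank_comp_perm (x : ι → α) (π : Equiv.Perm ι) (j : ι) :
    rank (x ∘ π) j = rank x (π j) :=
  card_equiv π fun i => by simp

theorem rank_lt_rank {x : ι → α} {a b : ι} (hab : x a < x b) : rank x a < rank x b := by
  refine card_lt_card ⟨fun i hi => ?_, fun hsub => ?_⟩
  · simp only [mem_filter, mem_univ, true_and] at hi ⊢
    exact hi.trans hab
  · exact (mem_filter.mp (hsub (by simpa using hab))).2.false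

theorem rank_injective {x : ι → α} (hx : Function.Injective x) :
    Function.Injective (rank x) := by
  intro a b hab
  by_contra hne
  rcases (hx.ne hne).lt_or_gt with h | h
  · exact (rank_lt_rank h).ne hab
  · exact (rank_lt_rank h).ne' hab

theorem rank_lt_card (x : ι → α) (j : ι) : rank x j < Fintype.card ι :=
  card_lt_univ_of_notMem (x := j) (by simp)

theorem image_rank_univ {x : ι → α} (hx : Function.Injective x) :
    univ.image (rank x) = range (Fintype.card ι) := by
  refine eq_of_subset_of_card_le (fun m hm => ?_) ?_
  · obtain ⟨j, -, rfl⟩ := mem_image.mp hm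
    exact mem_range.mpr (rank_lt_card x j)
  · rw [card_image_of_injective _ (rank_injective hx), card_range, card_univ]

theorem card_rank_lt {x : ι → α} (hx : Function.Injective x) {k : ℕ}
    (hk : k ≤ Fintype.card ι) : #{j | rank x j < k} = k := by
  classical
  rw [← card_image_of_injective _ (rank_injective hx), ← filter_image (p := (· < k)),
    image_rank_univ hx, range_eq_Ico, Ico_filter_lt, Nat.card_Ico, min_eq_right hk, Nat.sub_zero]

theorem rank_last {n : ℕ} (x : Fin (n + 1) → α) :
    rank x (Fin.last n) = #{i : Fin n | x i.castSucc < x (Fin.last n)} := by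
  rw [rank, card_filter, card_filter, Fin.sum_univ_castSucc]
  simp

end Rank

section Exchangeable

variable {Ω ι α : Type*} [MeasurableSpace Ω] {P : Measure Ω} [Fintype ι]
  [LinearOrder α] [TopologicalSpace α] [OrderClosedTopology α] [SecondCountableTopology α]
  [MeasurableSpace α] [OpensMeasurableSpace α]

theorem measurable_rank (j : ι) : Measurable fun x : ι → α => rank x j := by
  simp only [rank, card_filter]
  exact Finset.measurable_sum _ fun i _ =>
    Measurable.ite (measurableSet_lt (measurable_pi_apply i) (measurable_pi_apply j))
      measurable_const measurable_const

theorem measure_rank_lt_eq_of_exchangeable {X : Ω → ι → α} (hX : Measurable X)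
    (hexch : ∀ π : Equiv.Perm ι, P.map (fun ω => X ω ∘ π) = P.map X) (k : ℕ) (i j : ι) :
    P {ω | rank (X ω) i < k} = P {ω | rank (X ω) j < k} := by
  classical
  have hB : MeasurableSet {x : ι → α | rank x j < k} :=
    measurableSet_lt (measurable_rank j) measurable_const
  have hXπ : Measurable fun ω => X ω ∘ Equiv.swap j i := by fun_prop
  have := congrArg (· {x | rank x j < k}) (hexch (Equiv.swap j i))
  simp only [Measure.map_apply hXπ hB, Measure.map_apply hX hB] at this
  simpa [Set.preimage, rank_comp_perm] using this

theorem sum_measure_rank_lt [IsProbabilityMeasure P] {X : Ω → ι → α} (hX : Measurable X)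
    (hinj : ∀ᵐ ω ∂P, Function.Injective (X ω)) {k : ℕ} (hk : k ≤ Fintype.card ι) :
    ∑ j, P {ω | rank (X ω) j < k} = k := by
  have hA : ∀ j, MeasurableSet {ω | rank (X ω) j < k} :=
    fun j => measurableSet_lt ((measurable_rank j).comp hX) measurable_const
  calc ∑ j, P {ω | rank (X ω) j < k}
      = ∫⁻ ω, ∑ j, {ω | rank (X ω) j < k}.indicator 1 ω ∂P := by
        rw [lintegral_finsetSum _ fun j _ => measurable_one.indicator (hA j)]
        simp_rw [lintegral_indicator_one (hA _)]
    _ = ∫⁻ _, (k : ENNReal) ∂P := by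
        refine lintegral_congr_ae (hinj.mono fun ω hω => ?_)
        simp [Set.indicator_apply, card_rank_lt hω hk]
    _ = k := by simp

theorem measure_rank_lt_eq_div [IsProbabilityMeasure P] [Nonempty ι] {X : Ω → ι → α}
    (hX : Measurable X)
    (hexch : ∀ π : Equiv.Perm ι, P.map (fun ω => X ω ∘ π) = P.map X)
    (hinj : ∀ᵐ ω ∂P, Function.Injective (X ω)) {k : ℕ} (hk : k ≤ Fintype.card ι)
    (j : ι) :
    P {ω | rank (X ω) j < k} = k / Fintype.card ι := by
  have hsum := sum_measure_rank_lt hX hinj hk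
  simp only [measure_rank_lt_eq_of_exchangeable hX hexch k _ j, sum_const, card_univ,
    nsmul_eq_mul] at hsum
  rw [ENNReal.eq_div_iff (by simp) (by simp), hsum]

end Exchangeable

theorem ae_injective_of_measure_eq_zero {Ω ι α : Type*} [MeasurableSpace Ω] {P : Measure Ω}
    [Countable ι] {X : Ω → ι → α} (h : ∀ i j, i ≠ j → P {ω | X ω i = X ω j} = 0) :
    ∀ᵐ ω ∂P, Function.Injective (X ω) := by
  have : ∀ᵐ ω ∂P, ∀ i j, i ≠ j → X ω i ≠ X ω j := by
    simp only [ae_all_iff]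
    intro i j hij
    filter_upwards [measure_eq_zero_iff_ae_notMem.mp (h i j hij)] with ω hω using hω
  filter_upwards [this] with ω hω i j
  exact not_imp_not.mp (hω i j)

theorem prob_le_conformal_quantile_general
    {Ω : Type*} [MeasurableSpace Ω] (P : Measure Ω) [IsProbabilityMeasure P]
    (N : ℕ) (α : ℝ) (hα1 : α < 1)
    (hk : ⌈((N : ℝ) + 1) * (1 - α)⌉ ≤ (N : ℤ))
    (S : Fin (N + 1) → Ω → ℝ)
    (hmeas : ∀ i, Measurable (S i))
    (hexch : ∀ π : Equiv.Perm (Fin (N + 1)),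
      Measure.map (fun ω => fun i => S (π i) ω) P
        = Measure.map (fun ω => fun i => S i ω) P)
    (hdist : ∀ i j, i ≠ j → P {ω | S i ω = S j ω} = 0) :
    P {ω | S (Fin.last N) ω ≤
        orderStat (fun i : Fin N => S i.castSucc ω) (⌈((N : ℝ) + 1) * (1 - α)⌉).toNat}
      = ((⌈((N : ℝ) + 1) * (1 - α)⌉).toNat : ENNReal) / ((N : ENNReal) + 1) := by
  set k := (⌈((N : ℝ) + 1) * (1 - α)⌉).toNat
  have hk_pos : 1 ≤ k := by
    have : 0 < ⌈((N : ℝ) + 1) * (1 - α)⌉ := Int.ceil_pos.mpr (by nlinarith)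
    omega
  have hkN : k ≤ N := by omega
  set X : Ω → Fin (N + 1) → ℝ := fun ω i => S i ω
  have hevent : {ω | S (Fin.last N) ω ≤ orderStat (fun i : Fin N => S i.castSucc ω) k}
      = {ω | rank (X ω) (Fin.last N) < k} := by
    ext ω
    simp only [Set.mem_ofPred_eq, le_orderStat_iff _ _ hk_pos hkN, rank_last, X]
  rw [hevent, measure_rank_lt_eq_div (by fun_prop) hexch (ae_injective_of_measure_eq_zero hdist)
    (by rw [Fintype.card_fin]; omega), Fintype.card_fin, Nat.cast_succ]

/-- For exchangeable, a.s. pairwise distinct scores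
`S 0, …, S N` (calibration scores `S 0, …, S (N-1)` and test score `S (Fin.last N)`),
with `α ∈ (0,1)` such that `⌈(N+1)(1-α)⌉ ≤ N`, the conformal quantile
`q_α = S_(⌈(N+1)(1-α)⌉)` (order statistic of the calibration scores) satisfies
`ℙ(S_{N+1} ≤ q_α) = ⌈(N+1)(1-α)⌉ / (N+1)`. -/
theorem prob_le_conformal_quantile
    {Ω : Type*} [MeasurableSpace Ω] (P : Measure Ω) [IsProbabilityMeasure P]
    (N : ℕ) (hN : 1 ≤ N) (α : ℝ) (hα0 : 0 < α) (hα1 : α < 1)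
    (hk : ⌈((N : ℝ) + 1) * (1 - α)⌉ ≤ (N : ℤ))
    (S : Fin (N + 1) → Ω → ℝ)
    (hmeas : ∀ i, Measurable (S i))
    (hexch : ∀ π : Equiv.Perm (Fin (N + 1)),
      Measure.map (fun ω => fun i => S (π i) ω) P
        = Measure.map (fun ω => fun i => S i ω) P)
    (hdist : ∀ i j, i ≠ j → P {ω | S i ω = S j ω} = 0) :
    P {ω | S (Fin.last N) ω ≤
        orderStat (fun i : Fin N => S i.castSucc ω) (⌈((N : ℝ) + 1) * (1 - α)⌉).toNat}
      = ((⌈((N : ℝ) + 1) * (1 - α)⌉).toNat : ENNReal) / ((N : ENNReal) + 1) :=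
  prob_le_conformal_quantile_general P N α hα1 hk S hmeas hexch hdist
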